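/- Let (G,σ,w) be a positive-connected signed graph with consensus index ε₀, and let 0 < ε < ε₀. Then the ε-repelling matrix Ω_ε, with entries Ω_ε(i,j) = (e_i−e_j)ᵀL_ε†(e_i−e_j), is an invertible matrix. -/

import Mathlib

open Matrix BigOperators

open scoped Classical

/-- Moore–Penrose pseudoinverse of a square real matrix (chosen via the
defining Penrose equations; it is unique when it exists). -/
noncomputable def pinv {n : ℕ} (A : Matrix (Fin n) (Fin n) ℝ) : Matrix (Fin n) (Fin n) ℝ :=
  if h : ∃ B : Matrix (Fin n) (Fin n) ℝ,
      A * B * A = A ∧ B * A * B = B ∧ (A * B)ᵀ = A * B ∧ (B * A)ᵀ = B * A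
  then h.choose else 0

/-- The eigenvalues of a symmetric real matrix, sorted in nondecreasing order. -/
noncomputable def sortedEigs {n : ℕ} (A : Matrix (Fin n) (Fin n) ℝ) : List ℝ :=
  if h : A.IsHermitian then (Finset.univ.val.map h.eigenvalues).sort (· ≤ ·) else []

/-- The second smallest eigenvalue (with multiplicity) of a symmetric real matrix. -/
noncomputable def secondSmallestEig {n : ℕ} (A : Matrix (Fin n) (Fin n) ℝ) : ℝ :=
  (sortedEigs A).getD 1 0

/-- The largest eigenvalue of a symmetric real matrix. -/
noncomputable def largestEig {n : ℕ} (A : Matrix (Fin n) (Fin n) ℝ) : ℝ :=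
  (sortedEigs A).getD (n - 1) 0

/-- A signed weighted graph on `n` vertices, given by the positive-part and
negative-part weight functions (an edge carries a positive weight and a sign;
`wplus i j > 0` iff `(i,j)` is a positive edge, `wminus i j > 0` iff it is a
negative edge). -/
structure SignedGraph (n : ℕ) where
  wplus : Fin n → Fin n → ℝ
  wminus : Fin n → Fin n → ℝ
  wplus_symm : ∀ i j, wplus i j = wplus j i
  wminus_symm : ∀ i j, wminus i j = wminus j i
  wplus_nonneg : ∀ i j, 0 ≤ wplus i j
  wminus_nonneg : ∀ i j, 0 ≤ wminus i j
  wplus_diag : ∀ i, wplus i i = 0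
  wminus_diag : ∀ i, wminus i i = 0
  disjoint : ∀ i j, wplus i j = 0 ∨ wminus i j = 0

namespace SignedGraph

variable {n : ℕ} (Γ : SignedGraph n)

/-- positive degree -/
noncomputable def dplus (i : Fin n) : ℝ := ∑ j, Γ.wplus i j

/-- negative degree -/
noncomputable def dminus (i : Fin n) : ℝ := ∑ j, Γ.wminus i j

/-- Laplacian of the positive subgraph -/
noncomputable def Lplus : Matrix (Fin n) (Fin n) ℝ :=
  Matrix.of fun i j => if i = j then Γ.dplus i else -Γ.wplus i j

/-- Laplacian of the negative subgraph -/
noncomputable def Lminus : Matrix (Fin n) (Fin n) ℝ :=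
  Matrix.of fun i j => if i = j then Γ.dminus i else -Γ.wminus i j

/-- the ε-repelling Laplacian `L₊ - ε L₋` -/
noncomputable def Leps (ε : ℝ) : Matrix (Fin n) (Fin n) ℝ := Γ.Lplus - ε • Γ.Lminus

/-- the positive subgraph as a simple graph -/
def posGraph : SimpleGraph (Fin n) := SimpleGraph.fromRel (fun i j => 0 < Γ.wplus i j)

/-- the negative subgraph as a simple graph -/
def negGraph : SimpleGraph (Fin n) := SimpleGraph.fromRel (fun i j => 0 < Γ.wminus i j)

/-- the underlying simple graph -/
def underlying : SimpleGraph (Fin n) :=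
  SimpleGraph.fromRel (fun i j => 0 < Γ.wplus i j + Γ.wminus i j)

/-- the signed graph is positive-connected -/
def PosConnected : Prop := Γ.posGraph.Connected

/-- the signed graph is negative-connected -/
def NegConnected : Prop := Γ.negGraph.Connected

/-- the consensus index ε₀ -/
noncomputable def consensusIndex : ℝ :=
  sSup {ε : ℝ | 0 < ε ∧ (Γ.Leps ε).PosSemidef ∧ (Γ.Leps ε).rank = n - 1}

/-- the ε-repelling cost Ω_ε(i,j) = (e_i - e_j)ᵀ L_ε† (e_i - e_j) -/
noncomputable def cost (ε : ℝ) (i j : Fin n) : ℝ :=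
  (Pi.single i 1 - Pi.single j 1) ⬝ᵥ (pinv (Γ.Leps ε)) *ᵥ (Pi.single i 1 - Pi.single j 1)

/-- the ε-repelling matrix Ω_ε -/
noncomputable def costMatrix (ε : ℝ) : Matrix (Fin n) (Fin n) ℝ :=
  Matrix.of fun i j => Γ.cost ε i j

/-- the node ε-repelling curvature, the unique solution of Ω_ε τ_ε = n·1 -/
noncomputable def tau (ε : ℝ) : Fin n → ℝ :=
  (Γ.costMatrix ε)⁻¹ *ᵥ (fun _ => (n : ℝ))

/-- φ_ε = n · 1ᵀ Ω_ε⁻¹ 1 -/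
noncomputable def phi (ε : ℝ) : ℝ :=
  (n : ℝ) * ((fun _ => (1 : ℝ)) ⬝ᵥ ((Γ.costMatrix ε)⁻¹ *ᵥ fun _ => (1 : ℝ)))

/-- the quantity Λ_ε(i,j) appearing in the edge ε-repelling curvature -/
noncomputable def Lam (ε : ℝ) (i j : Fin n) : ℝ :=
  (Γ.dminus i + Γ.dminus j)
    - (∑ k, Γ.cost ε j k * Γ.wminus i k + ∑ k, Γ.cost ε i k * Γ.wminus j k) / Γ.cost ε i j

/-- the edge ε-repelling curvature ϑ_ε(i,j) -/
noncomputable def edgeCurv (ε : ℝ) (i j : Fin n) : ℝ :=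
  2 * (Γ.tau ε i + Γ.tau ε j) / Γ.cost ε i j + (1 + ε) * Γ.Lam ε i j

end SignedGraph

/-!
Pick `ε'` in the set defining `ε₀` with `ε < ε'`. Then `L_ε = L_ε' + (ε' - ε) L₋` is positive
semidefinite and its kernel is that of `L_ε'`, which has rank `n - 1`: the constants. Its
Moore–Penrose inverse is `B = (L_ε + J/n)⁻¹ - J/n` (`J` the all-ones matrix), again positive
semidefinite with the constants as kernel, and `Ω_ε(i,j) = B i i + B j j - 2 B i j`.
If `Ω_ε x = 0`, put `s = ∑ x i` and `t = ∑ B i i x i`; pairing with `1` and with `x` gives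
`tr B · s + n t = 0` and `xᵀ B x = s t`, so `tr B · s² = -n xᵀ B x ≤ 0`. As `tr B > 0`, `s = 0`,
then `xᵀ B x = 0`, so `x` is constant with zero sum, i.e. `x = 0`.
-/

section LinearAlgebra

variable {ι : Type*} [Fintype ι]

lemma span_one_ne_top [Nontrivial ι] : (ℝ ∙ (1 : ι → ℝ)) ≠ ⊤ := by
  intro h
  have := congrArg (fun S : Submodule ℝ (ι → ℝ) => Module.finrank ℝ S) h
  simp only [finrank_span_singleton one_ne_zero, finrank_top, Module.finrank_fintype_fun_eq_card]
    at this
  exact (Fintype.one_lt_card_iff_nontrivial.mpr ‹_›).ne this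

lemma Matrix.PosSemidef.ker_add {A B : Matrix ι ι ℝ} (hA : A.PosSemidef) (hB : B.PosSemidef) :
    LinearMap.ker (A + B).mulVecLin = LinearMap.ker A.mulVecLin ⊓ LinearMap.ker B.mulVecLin := by
  ext x
  simp only [Submodule.mem_inf, LinearMap.mem_ker, mulVecLin_apply]
  rw [← (hA.add hB).dotProduct_mulVec_zero_iff, ← hA.dotProduct_mulVec_zero_iff,
    ← hB.dotProduct_mulVec_zero_iff, add_mulVec, dotProduct_add]
  exact add_eq_zero_iff_of_nonneg (hA.dotProduct_mulVec_nonneg x)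
    (hB.dotProduct_mulVec_nonneg x)

lemma mulVec_one_of_ker_eq_span_one {A : Matrix ι ι ℝ}
    (hker : LinearMap.ker A.mulVecLin = ℝ ∙ 1) : A *ᵥ 1 = 0 := by
  simpa using hker.ge (Submodule.mem_span_singleton_self 1)

lemma ker_mulVecLin_eq_span_one_of_rank [Nonempty ι]
    {A : Matrix ι ι ℝ} (hrank : A.rank = Fintype.card ι - 1) (h1 : A *ᵥ 1 = 0) :
    LinearMap.ker A.mulVecLin = ℝ ∙ 1 := by
  have hker : Module.finrank ℝ (LinearMap.ker A.mulVecLin) = 1 := by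
    have := LinearMap.finrank_range_add_finrank_ker A.mulVecLin
    rw [← rank, hrank, Module.finrank_fintype_fun_eq_card] at this
    have := Fintype.card_pos (α := ι)
    omega
  refine (Submodule.eq_of_le_of_finrank_eq ?_ ?_).symm
  · rw [Submodule.span_singleton_le_iff_mem, LinearMap.mem_ker, mulVecLin_apply, h1]
  · rw [finrank_span_singleton one_ne_zero, hker]

end LinearAlgebra

section WeightedLaplacian

variable {ι : Type*} [Fintype ι] [DecidableEq ι] {w : ι → ι → ℝ}

def weightedLaplacian (w : ι → ι → ℝ) : Matrix ι ι ℝ :=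
  Matrix.of fun i j => if i = j then ∑ k, w i k else -w i j

lemma weightedLaplacian_mulVec (hd : ∀ i, w i i = 0) (x : ι → ℝ) :
    weightedLaplacian w *ᵥ x = fun i => ∑ j, w i j * (x i - x j) := by
  ext i
  simp only [weightedLaplacian, mulVec, dotProduct, of_apply, ite_mul, neg_mul, mul_sub,
    Finset.sum_sub_distrib, ← Finset.sum_mul]
  rw [← Finset.add_sum_erase _ _ (Finset.mem_univ i),
    ← Finset.add_sum_erase _ (fun j => w i j * x j) (Finset.mem_univ i), if_pos rfl, hd, zero_mul,
    zero_add, sub_eq_add_neg, ← Finset.sum_neg_distrib]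
  congr 1
  exact Finset.sum_congr rfl fun j hj => if_neg (Finset.ne_of_mem_erase hj).symm

lemma weightedLaplacian_mulVec_one (hd : ∀ i, w i i = 0) : weightedLaplacian w *ᵥ 1 = 0 := by
  ext i
  simp [weightedLaplacian_mulVec hd]

lemma dotProduct_weightedLaplacian_mulVec (hs : ∀ i j, w i j = w j i) (hd : ∀ i, w i i = 0)
    (x : ι → ℝ) :
    x ⬝ᵥ weightedLaplacian w *ᵥ x = (∑ i, ∑ j, w i j * (x i - x j) ^ 2) / 2 := by
  have hswap : ∑ i, ∑ j, w i j * (x i * (x i - x j))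
      = ∑ i, ∑ j, w i j * (x j * (x j - x i)) := by
    rw [Finset.sum_comm]
    simp only [hs]
  have hsplit : ∑ i, ∑ j, w i j * (x i - x j) ^ 2
      = ∑ i, ∑ j, w i j * (x i * (x i - x j)) + ∑ i, ∑ j, w i j * (x j * (x j - x i)) := by
    simp only [← Finset.sum_add_distrib]
    exact Finset.sum_congr rfl fun i _ => Finset.sum_congr rfl fun j _ => by ring
  rw [hsplit, ← hswap, ← mul_two, eq_div_iff two_ne_zero, weightedLaplacian_mulVec hd]
  congr 1
  simp only [dotProduct, Finset.mul_sum]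
  exact Finset.sum_congr rfl fun i _ => Finset.sum_congr rfl fun j _ => by ring

lemma posSemidef_weightedLaplacian (hs : ∀ i j, w i j = w j i) (hd : ∀ i, w i i = 0)
    (hw : ∀ i j, 0 ≤ w i j) : (weightedLaplacian w).PosSemidef := by
  refine .of_dotProduct_mulVec_nonneg ?_ fun x => ?_
  · rw [isHermitian_iff_isSymm]
    ext i j
    rcases eq_or_ne i j with rfl | h
    · rfl
    · simp [weightedLaplacian, h, h.symm, hs]
  · rw [star_trivial, dotProduct_weightedLaplacian_mulVec hs hd]
    exact div_nonneg (Finset.sum_nonneg fun i _ => Finset.sum_nonneg fun j _ =>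
      mul_nonneg (hw i j) (sq_nonneg _)) zero_le_two

end WeightedLaplacian

section Penrose

variable {n : ℕ}

def IsPenroseInverse (A B : Matrix (Fin n) (Fin n) ℝ) : Prop :=
  A * B * A = A ∧ B * A * B = B ∧ (A * B)ᵀ = A * B ∧ (B * A)ᵀ = B * A

namespace IsPenroseInverse

variable {A B C : Matrix (Fin n) (Fin n) ℝ}

theorem unique (hB : IsPenroseInverse A B) (hC : IsPenroseInverse A C) : B = C := by
  obtain ⟨b1, b2, b3, b4⟩ := hB
  obtain ⟨c1, c2, c3, c4⟩ := hC
  have hAB : A * B = A * C := calc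
    A * B = (A * C * A * B)ᵀ := by rw [c1, b3]
    _ = (A * B)ᵀ * (A * C)ᵀ := by rw [← transpose_mul, ← mul_assoc]
    _ = A * C := by rw [b3, c3, ← mul_assoc, b1]
  have hBA : B * A = C * A := calc
    B * A = (B * (A * C * A))ᵀ := by rw [c1, b4]
    _ = (C * A)ᵀ * (B * A)ᵀ := by rw [← transpose_mul]; simp only [mul_assoc]
    _ = C * A := by rw [c4, b4, mul_assoc C, ← mul_assoc A, b1]
  calc B = B * A * B := b2.symm
    _ = C * A * C := by rw [hBA, mul_assoc, hAB, ← mul_assoc]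
    _ = C := c2

theorem pinv_eq (hB : IsPenroseInverse A B) : pinv A = B := by
  have hex : ∃ C, IsPenroseInverse A C := ⟨B, hB⟩
  exact (dif_pos hex).trans (hex.choose_spec.unique hB)

theorem transpose (hB : IsPenroseInverse A B) : IsPenroseInverse Aᵀ Bᵀ := by
  obtain ⟨b1, b2, b3, b4⟩ := hB
  refine ⟨?_, ?_, ?_, ?_⟩
  · rw [← transpose_mul, ← transpose_mul, ← mul_assoc, b1]
  · rw [← transpose_mul, ← transpose_mul, ← mul_assoc, b2]
  · rw [← transpose_mul, transpose_transpose, b4]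
  · rw [← transpose_mul, transpose_transpose, b3]

theorem transpose_eq (hA : Aᵀ = A) (hB : IsPenroseInverse A B) : Bᵀ = B :=
  (hA ▸ hB.transpose).unique hB

theorem posSemidef (hA : A.PosSemidef) (hB : IsPenroseInverse A B) : B.PosSemidef := by
  have hBt : Bᴴ = B := by
    rw [conjTranspose_eq_transpose_of_trivial]
    exact hB.transpose_eq (by simpa using hA.isHermitian.eq)
  simpa only [hBt, hB.2.1] using hA.conjTranspose_mul_mul_same B

theorem ker_eq (hA : Aᵀ = A) (hB : IsPenroseInverse A B) :
    LinearMap.ker B.mulVecLin = LinearMap.ker A.mulVecLin := by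
  have hBt := hB.transpose_eq hA
  obtain ⟨b1, b2, b3, b4⟩ := hB
  have hB' : B = B * B * A := calc
    B = B * (A * B)ᵀ := by rw [b3, ← mul_assoc, b2]
    _ = B * B * A := by rw [transpose_mul, hA, hBt, mul_assoc]
  have hA' : A = A * A * B := calc
    A = A * (B * A)ᵀ := by rw [b4, ← mul_assoc, b1]
    _ = A * A * B := by rw [transpose_mul, hA, hBt, mul_assoc]
  ext x
  simp only [LinearMap.mem_ker, mulVecLin_apply]
  constructor
  · intro hx
    rw [hA', ← mulVec_mulVec, hx, mulVec_zero]
  · intro hx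
    rw [hB', ← mulVec_mulVec, hx, mulVec_zero]

end IsPenroseInverse

theorem isPenroseInverse_sub_of_mul_eq {K Q : Matrix (Fin n) (Fin n) ℝ} (hK : IsUnit K)
    (hKQ : K * Q = Q) (hQK : Q * K = Q) (hQQ : Q * Q = Q) (hQt : Qᵀ = Q) :
    IsPenroseInverse (K - Q) (K⁻¹ - Q) := by
  have hdet : IsUnit K.det := (isUnit_iff_isUnit_det K).mp hK
  have hKiQ : K⁻¹ * Q = Q := by
    nth_rewrite 1 [← hKQ]
    rw [← mul_assoc, nonsing_inv_mul _ hdet, one_mul]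
  have hQKi : Q * K⁻¹ = Q := by
    nth_rewrite 1 [← hQK]
    rw [mul_assoc, mul_nonsing_inv _ hdet, mul_one]
  have hl : (K - Q) * (K⁻¹ - Q) = 1 - Q := by
    simp only [sub_mul, mul_sub, mul_nonsing_inv _ hdet, hKQ, hQKi, hQQ]
    abel
  have hr : (K⁻¹ - Q) * (K - Q) = 1 - Q := by
    simp only [sub_mul, mul_sub, nonsing_inv_mul _ hdet, hKiQ, hQK, hQQ]
    abel
  refine ⟨?_, ?_, ?_, ?_⟩
  · rw [hl]
    simp only [sub_mul, mul_sub, one_mul, hQK, hQQ]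
    abel
  · rw [hr]
    simp only [sub_mul, mul_sub, one_mul, hQKi, hQQ]
    abel
  · rw [hl, transpose_sub, transpose_one, hQt]
  · rw [hr, transpose_sub, transpose_one, hQt]

end Penrose

section Averaging

variable {n : ℕ}

noncomputable def averagingMatrix (n : ℕ) : Matrix (Fin n) (Fin n) ℝ :=
  Matrix.of fun _ _ => (n : ℝ)⁻¹

lemma averagingMatrix_transpose : (averagingMatrix n)ᵀ = averagingMatrix n := rfl

lemma averagingMatrix_mulVec (x : Fin n → ℝ) :
    averagingMatrix n *ᵥ x = ((n : ℝ)⁻¹ * ∑ i, x i) • 1 := by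
  ext i
  simp [averagingMatrix, mulVec, dotProduct, Finset.mul_sum]

lemma averagingMatrix_mulVec_one [NeZero n] : averagingMatrix n *ᵥ 1 = 1 := by
  simp [averagingMatrix_mulVec]

lemma averagingMatrix_mul_self [NeZero n] :
    averagingMatrix n * averagingMatrix n = averagingMatrix n := by
  ext i j
  simp only [averagingMatrix, mul_apply, of_apply, Finset.sum_const, Finset.card_univ,
    Fintype.card_fin, nsmul_eq_mul]
  field_simp

lemma mul_averagingMatrix {A : Matrix (Fin n) (Fin n) ℝ} (hA : A *ᵥ 1 = 0) :
    A * averagingMatrix n = 0 := by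
  ext i j
  simpa [averagingMatrix, mul_apply, mulVec, dotProduct, ← Finset.sum_mul] using
    congrArg (· * (n : ℝ)⁻¹) (congrFun hA i)

lemma posSemidef_averagingMatrix : (averagingMatrix n).PosSemidef := by
  refine .of_dotProduct_mulVec_nonneg (by ext i j; rfl) fun x => ?_
  rw [averagingMatrix_mulVec, dotProduct_smul, dotProduct_one, star_trivial, smul_eq_mul,
    mul_assoc]
  exact mul_nonneg (by positivity) (mul_self_nonneg _)

theorem exists_isPenroseInverse_of_ker_eq_span_one [NeZero n] {L : Matrix (Fin n) (Fin n) ℝ}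
    (hL : L.PosSemidef) (hker : LinearMap.ker L.mulVecLin = ℝ ∙ 1) :
    ∃ B, IsPenroseInverse L B := by
  have hLQ : L * averagingMatrix n = 0 := mul_averagingMatrix (mulVec_one_of_ker_eq_span_one hker)
  have hQL : averagingMatrix n * L = 0 := by
    simpa [averagingMatrix_transpose, (isHermitian_iff_isSymm.mp hL.isHermitian).eq] using
      congrArg transpose hLQ
  have hK : IsUnit (L + averagingMatrix n) := by
    rw [← mulVec_injective_iff_isUnit, ← coe_mulVecLin, ← LinearMap.ker_eq_bot,
      hL.ker_add posSemidef_averagingMatrix, hker, Submodule.eq_bot_iff]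
    rintro x ⟨hx1, hxQ⟩
    obtain ⟨c, rfl⟩ := Submodule.mem_span_singleton.mp hx1
    simpa [mulVec_smul, averagingMatrix_mulVec_one] using hxQ
  refine ⟨(L + averagingMatrix n)⁻¹ - averagingMatrix n, ?_⟩
  simpa using isPenroseInverse_sub_of_mul_eq hK
    (by rw [add_mul, hLQ, zero_add, averagingMatrix_mul_self])
    (by rw [mul_add, hQL, zero_add, averagingMatrix_mul_self])
    averagingMatrix_mul_self averagingMatrix_transpose

end Averaging

section SqDist

variable {ι : Type*} [Fintype ι]

def sqDistMatrix (B : Matrix ι ι ℝ) : Matrix ι ι ℝ :=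
  Matrix.of fun i j => B i i + B j j - 2 * B i j

lemma dotProduct_mulVec_single_sub_single [DecidableEq ι] {B : Matrix ι ι ℝ} (hB : B.IsSymm)
    (i j : ι) :
    (Pi.single i 1 - Pi.single j 1) ⬝ᵥ B *ᵥ (Pi.single i 1 - Pi.single j 1)
      = sqDistMatrix B i j := by
  have hji : B j i = B i j := hB.apply i j
  simp only [sqDistMatrix, of_apply, mulVec_sub, sub_dotProduct, dotProduct_sub,
    mulVec_single_one, single_one_dotProduct, col_apply, hji]
  ring

lemma sqDistMatrix_mulVec (B : Matrix ι ι ℝ) (x : ι → ℝ) :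
    sqDistMatrix B *ᵥ x = (∑ i, x i) • B.diag + (B.diag ⬝ᵥ x) • 1 - (2 : ℝ) • (B *ᵥ x) := by
  ext k
  simp only [sqDistMatrix, mulVec, dotProduct, of_apply, diag_apply, Pi.add_apply, Pi.sub_apply,
    Pi.smul_apply, smul_eq_mul, Pi.one_apply, mul_one, Finset.sum_mul, Finset.mul_sum,
    ← Finset.sum_add_distrib, ← Finset.sum_sub_distrib]
  exact Finset.sum_congr rfl fun j _ => by ring

lemma trace_pos_of_ker_eq_span_one [Nontrivial ι] {B : Matrix ι ι ℝ} (hB : B.PosSemidef)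
    (hker : LinearMap.ker B.mulVecLin = ℝ ∙ 1) : 0 < B.trace := by
  refine hB.trace_nonneg.lt_of_ne fun h => span_one_ne_top (ι := ι) ?_
  rw [← hker, (hB.trace_eq_zero_iff.mp h.symm)]
  ext x
  simp

lemma sum_eq_zero_of_sqDistMatrix_mulVec_eq_zero {B : Matrix ι ι ℝ} (hB : B.PosSemidef)
    (htr : 0 < B.trace) (h1B : ∀ y, 1 ⬝ᵥ B *ᵥ y = 0) {x : ι → ℝ}
    (hx : sqDistMatrix B *ᵥ x = 0) : ∑ i, x i = 0 ∧ x ⬝ᵥ B *ᵥ x = 0 := by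
  rw [sqDistMatrix_mulVec] at hx
  set s := ∑ i, x i
  set t := B.diag ⬝ᵥ x
  have hsum : s * B.trace + t * Fintype.card ι = 0 := by
    simpa [h1B, trace, one_dotProduct] using congrArg (1 ⬝ᵥ ·) hx
  have hquad : x ⬝ᵥ B *ᵥ x = s * t := by
    have := congrArg (x ⬝ᵥ ·) hx
    simp only [dotProduct_sub, dotProduct_add, dotProduct_smul, dotProduct_one, smul_eq_mul,
      dotProduct_zero, dotProduct_comm x B.diag] at this
    linarith
  have hneg : s * s * B.trace ≤ 0 := calc
    s * s * B.trace = -(Fintype.card ι * (x ⬝ᵥ B *ᵥ x)) := by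
      linear_combination s * hsum + (Fintype.card ι : ℝ) * hquad
    _ ≤ 0 := neg_nonpos.mpr (mul_nonneg (Nat.cast_nonneg _) (by
      simpa using hB.dotProduct_mulVec_nonneg x))
  have hs : s = 0 :=
    mul_self_eq_zero.mp (le_antisymm (nonpos_of_mul_nonpos_left hneg htr) (mul_self_nonneg s))
  exact ⟨hs, by rw [hquad, hs, zero_mul]⟩

theorem isUnit_sqDistMatrix [DecidableEq ι] [Nontrivial ι] {B : Matrix ι ι ℝ}
    (hB : B.PosSemidef) (hker : LinearMap.ker B.mulVecLin = ℝ ∙ 1) :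
    IsUnit (sqDistMatrix B) := by
  rw [isUnit_iff_isUnit_det, isUnit_iff_ne_zero, Ne, ← exists_mulVec_eq_zero_iff]
  rintro ⟨x, hx0, hx⟩
  have h1B : ∀ y, 1 ⬝ᵥ B *ᵥ y = 0 := fun y => by
    rw [dotProduct_mulVec, ← mulVec_transpose, (isHermitian_iff_isSymm.mp hB.isHermitian).eq,
      mulVec_one_of_ker_eq_span_one hker, zero_dotProduct]
  obtain ⟨hs, hq⟩ := sum_eq_zero_of_sqDistMatrix_mulVec_eq_zero hB
    (trace_pos_of_ker_eq_span_one hB hker) h1B hx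
  have hBx : x ∈ LinearMap.ker B.mulVecLin := by
    simpa [← hB.dotProduct_mulVec_zero_iff] using hq
  obtain ⟨c, rfl⟩ := Submodule.mem_span_singleton.mp (hker ▸ hBx)
  simp only [Pi.smul_apply, Pi.one_apply, smul_eq_mul, mul_one, Finset.sum_const,
    Finset.card_univ, nsmul_eq_mul, mul_eq_zero, Nat.cast_eq_zero, Fintype.card_ne_zero,
    false_or] at hs
  exact hx0 (by rw [hs, zero_smul])

end SqDist

namespace SignedGraph

variable {n : ℕ} (Γ : SignedGraph n)

lemma Lminus_posSemidef : Γ.Lminus.PosSemidef :=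
  posSemidef_weightedLaplacian Γ.wminus_symm Γ.wminus_diag Γ.wminus_nonneg

lemma Lminus_mulVec_one : Γ.Lminus *ᵥ 1 = 0 :=
  weightedLaplacian_mulVec_one Γ.wminus_diag

lemma Leps_mulVec_one (ε : ℝ) : Γ.Leps ε *ᵥ 1 = 0 := by
  have hplus : Γ.Lplus *ᵥ 1 = 0 := weightedLaplacian_mulVec_one Γ.wplus_diag
  rw [Leps, sub_mulVec, smul_mulVec, hplus, Γ.Lminus_mulVec_one, smul_zero, sub_zero]

lemma Leps_eq_add_smul_Lminus (ε ε' : ℝ) : Γ.Leps ε = Γ.Leps ε' + (ε' - ε) • Γ.Lminus := by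
  rw [Leps, Leps, sub_smul]
  abel

lemma Leps_eq_zero_of_subsingleton [Subsingleton (Fin n)] (ε : ℝ) : Γ.Leps ε = 0 := by
  ext i j
  rw [Subsingleton.elim j i]
  simpa [mulVec, dotProduct, Fintype.sum_subsingleton _ i] using
    congrFun (Γ.Leps_mulVec_one ε) i

-- With at most one vertex every `ε > 0` qualifies, so `sSup` of the unbounded set is the junk `0`.
lemma consensusIndex_eq_zero_of_subsingleton [Subsingleton (Fin n)] : Γ.consensusIndex = 0 := by
  refine Real.sSup_of_not_bddAbove fun ⟨b, hb⟩ => ?_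
  have hn : n - 1 = 0 := by
    have := Fin.subsingleton_iff_le_one.mp ‹_›
    omega
  have hmem : max b 0 + 1 ∈ {ε : ℝ | 0 < ε ∧ (Γ.Leps ε).PosSemidef ∧ (Γ.Leps ε).rank = n - 1} :=
    ⟨by positivity, by simp [Leps_eq_zero_of_subsingleton, PosSemidef.zero], by
      simp [Leps_eq_zero_of_subsingleton, hn]⟩
  linarith [hb hmem, le_max_left b 0]

lemma exists_gt_of_lt_consensusIndex {ε : ℝ} (hε0 : 0 < ε) (hε : ε < Γ.consensusIndex) :
    ∃ ε', ε < ε' ∧ (Γ.Leps ε').PosSemidef ∧ (Γ.Leps ε').rank = n - 1 := by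
  have hne : {ε : ℝ | 0 < ε ∧ (Γ.Leps ε).PosSemidef ∧ (Γ.Leps ε).rank = n - 1}.Nonempty := by
    rw [Set.nonempty_iff_ne_empty]
    intro h
    rw [consensusIndex, h, Real.sSup_empty] at hε
    exact hε0.not_gt hε
  obtain ⟨ε', ⟨-, hpsd, hrank⟩, hlt⟩ := exists_lt_of_lt_csSup hne hε
  exact ⟨ε', hlt, hpsd, hrank⟩

lemma posSemidef_Leps_and_ker_of_lt_consensusIndex [NeZero n] {ε : ℝ} (hε0 : 0 < ε)
    (hε : ε < Γ.consensusIndex) :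
    (Γ.Leps ε).PosSemidef ∧ LinearMap.ker (Γ.Leps ε).mulVecLin = ℝ ∙ 1 := by
  obtain ⟨ε', hlt, hpsd, hrank⟩ := Γ.exists_gt_of_lt_consensusIndex hε0 hε
  have hminus := Γ.Lminus_posSemidef.smul (sub_nonneg.mpr hlt.le)
  rw [Γ.Leps_eq_add_smul_Lminus ε ε']
  refine ⟨hpsd.add hminus, ?_⟩
  rw [hpsd.ker_add hminus, ker_mulVecLin_eq_span_one_of_rank (by rwa [Fintype.card_fin])
    (Γ.Leps_mulVec_one ε'), inf_eq_left, Submodule.span_singleton_le_iff_mem,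
    LinearMap.mem_ker, mulVecLin_apply, smul_mulVec, Γ.Lminus_mulVec_one, smul_zero]

lemma costMatrix_eq_sqDistMatrix {ε : ℝ} {B : Matrix (Fin n) (Fin n) ℝ}
    (hB : IsPenroseInverse (Γ.Leps ε) B) (hBt : Bᵀ = B) :
    Γ.costMatrix ε = sqDistMatrix B := by
  ext i j
  rw [costMatrix, of_apply, cost, hB.pinv_eq]
  exact dotProduct_mulVec_single_sub_single hBt i j

end SignedGraph

theorem stmt11_general {n : ℕ} (Γ : SignedGraph n)
    (ε : ℝ) (hε0 : 0 < ε) (hε : ε < Γ.consensusIndex) :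
    IsUnit (Γ.costMatrix ε) := by
  rcases subsingleton_or_nontrivial (Fin n) with _ | _
  · rw [Γ.consensusIndex_eq_zero_of_subsingleton] at hε
    exact (lt_irrefl 0 (hε0.trans hε)).elim
  have : NeZero n := ⟨by rintro rfl; exact not_nontrivial (Fin 0) ‹_›⟩
  obtain ⟨hL, hker⟩ := Γ.posSemidef_Leps_and_ker_of_lt_consensusIndex hε0 hε
  have hLt : (Γ.Leps ε)ᵀ = Γ.Leps ε := (isHermitian_iff_isSymm.mp hL.isHermitian).eq
  obtain ⟨B, hB⟩ := exists_isPenroseInverse_of_ker_eq_span_one hL hker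
  rw [Γ.costMatrix_eq_sqDistMatrix hB (hB.transpose_eq hLt)]
  exact isUnit_sqDistMatrix (hB.posSemidef hL) (hB.ker_eq hLt ▸ hker)

/-- the ε-repelling matrix Ω_ε is invertible. -/
theorem stmt11 {n : ℕ} (Γ : SignedGraph n) (hpc : Γ.PosConnected)
    (ε : ℝ) (hε0 : 0 < ε) (hε : ε < Γ.consensusIndex) :
    IsUnit (Γ.costMatrix ε) :=
  stmt11_general Γ ε hε0 hε
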